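/- Let n_r, n_{t,1}, n_{t,2}, L* be positive integers with L* ≥ n_{t,1}+n_{t,2} and min(n_r, n_{t,1}+n_{t,2}) > min(n_r, n_{t,1}, n_{t,2}). If L* < [min(n_r,n_{t,1}+n_{t,2})·(n_{t,1}+n_{t,2}) - min(n_{t,1}·n_r, n_{t,1}², n_{t,2}·n_r, n_{t,2}²)] / [min(n_r,n_{t,1}+n_{t,2}) - min(n_r,n_{t,1},n_{t,2})], then max_{β∈[0,1]}[β·min(n_r,n_{t,1})(1-n_{t,1}/L*) + (1-β)·min(n_r,n_{t,2})(1-n_{t,2}/L*)] > min(n_r, n_{t,1}+n_{t,2})·(1 - (n_{t,1}+n_{t,2})/L*). -/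

import Mathlib

/-!
It suffices to look at the endpoint of `[0, 1]` that serves only the user with fewer transmit
antennas, say `n_t ≤ n_t'`. For that user `min (n_t n_r) (n_t²) = min(n_r, n_t) · n_t` is the
smallest of the four products, so after multiplying out the denominator the condition on `L*`
reads `L* (M - m) < M (n_t + n_t') - m n_t` with `M = min(n_r, n_t + n_t')`, `m = min(n_r, n_t)`,
which is `M (1 - (n_t + n_t')/L*) < m (1 - n_t/L*)` after dividing by `L*`.
-/

open Set

lemma min_mul_self_eq_min_mul {a r : ℝ} (ha : 0 ≤ a) : min (a * r) (a ^ 2) = min r a * a := by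
  rw [min_mul_of_nonneg _ _ ha, mul_comm r a, sq]

lemma mul_one_sub_div_lt_mul_one_sub_div {M m s n L : ℝ} (hL : 0 < L)
    (h : L * (M - m) < M * s - m * n) : M * (1 - s / L) < m * (1 - n / L) := by
  have hgap : m * (1 - n / L) - M * (1 - s / L) = (M * s - m * n - L * (M - m)) / L := by
    field_simp
    ring
  exact sub_pos.1 (hgap ▸ div_pos (sub_pos.2 h) hL)

lemma joint_preLog_lt_of_le {r a b L : ℝ} (hr : 0 ≤ r) (ha : 0 ≤ a) (hab : a ≤ b) (hL : 0 < L)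
    (hden : min r (a + b) > min r (min a b))
    (hcond : L < (min r (a + b) * (a + b) - min (min (a * r) (a ^ 2)) (min (b * r) (b ^ 2))) /
      (min r (a + b) - min r (min a b))) :
    min r (a + b) * (1 - (a + b) / L) < min r a * (1 - a / L) := by
  have hmin : min r (min a b) = min r a := by rw [min_eq_left hab]
  have hmono : min r a * a ≤ min r b * b :=
    mul_le_mul (min_le_min_left r hab) hab ha (le_min hr (ha.trans hab))
  have hsq : min (min (a * r) (a ^ 2)) (min (b * r) (b ^ 2)) = min r a * a := by
    rw [min_mul_self_eq_min_mul ha, min_mul_self_eq_min_mul (ha.trans hab), min_eq_left hmono]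
  rw [hmin, hsq, lt_div_iff₀ (sub_pos.2 (hmin ▸ hden))] at hcond
  exact mul_one_sub_div_lt_mul_one_sub_div hL hcond

lemma joint_preLog_lt_max {r a b L : ℝ} (hr : 0 ≤ r) (ha : 0 ≤ a) (hb : 0 ≤ b) (hL : 0 < L)
    (hden : min r (a + b) > min r (min a b))
    (hcond : L < (min r (a + b) * (a + b) - min (min (a * r) (a ^ 2)) (min (b * r) (b ^ 2))) /
      (min r (a + b) - min r (min a b))) :
    min r (a + b) * (1 - (a + b) / L) < max (min r a * (1 - a / L)) (min r b * (1 - b / L)) := by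
  rcases le_total a b with hab | hba
  · exact lt_max_of_lt_left (joint_preLog_lt_of_le hr ha hab hL hden hcond)
  · refine lt_max_of_lt_right ?_
    rw [add_comm a b] at hden hcond ⊢
    rw [min_comm a b] at hden hcond
    rw [min_comm (min (a * r) _)] at hcond
    exact joint_preLog_lt_of_le hr hb hba hL hden hcond

theorem stmt_8_general (nr nt1 nt2 Lstar : ℕ)
    (hL : 0 < Lstar)
    (hden : min (nr:ℝ) (nt1 + nt2) > min (nr:ℝ) (min nt1 nt2))
    (hcond : (Lstar:ℝ) <
      (min (nr:ℝ) (nt1 + nt2) * ((nt1:ℝ) + nt2)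
          - min (min ((nt1:ℝ) * nr) ((nt1:ℝ)^2)) (min ((nt2:ℝ) * nr) ((nt2:ℝ)^2))) /
        (min (nr:ℝ) (nt1 + nt2) - min (nr:ℝ) (min nt1 nt2))) :
    sSup ((fun β : ℝ => β * min (nr:ℝ) nt1 * (1 - (nt1:ℝ)/(Lstar:ℝ))
        + (1 - β) * min (nr:ℝ) nt2 * (1 - (nt2:ℝ)/(Lstar:ℝ))) '' Set.Icc 0 1) >
      min (nr:ℝ) (nt1 + nt2) * (1 - ((nt1:ℝ) + nt2)/(Lstar:ℝ)) := by
  set f : ℝ → ℝ := fun β : ℝ => β * min (nr:ℝ) nt1 * (1 - (nt1:ℝ)/(Lstar:ℝ))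
    + (1 - β) * min (nr:ℝ) nt2 * (1 - (nt2:ℝ)/(Lstar:ℝ))
  have hf : ContinuousOn f (Icc 0 1) := by fun_prop
  calc min (nr:ℝ) (nt1 + nt2) * (1 - ((nt1:ℝ) + nt2)/(Lstar:ℝ)) < max (f 1) (f 0) := by
        simpa [f] using joint_preLog_lt_max (Nat.cast_nonneg nr) (Nat.cast_nonneg nt1)
          (Nat.cast_nonneg nt2) (Nat.cast_pos.2 hL) hden hcond
    _ ≤ sSup (f '' Icc 0 1) :=
        max_le (hf.le_sSup_image_Icc (by simp)) (hf.le_sSup_image_Icc (by simp))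

theorem stmt_8 (nr nt1 nt2 Lstar : ℕ) (hnr : 0 < nr) (hnt1 : 0 < nt1) (hnt2 : 0 < nt2)
    (hL : 0 < Lstar) (hLge : nt1 + nt2 ≤ Lstar)
    (hden : min (nr:ℝ) (nt1 + nt2) > min (nr:ℝ) (min nt1 nt2))
    (hcond : (Lstar:ℝ) <
      (min (nr:ℝ) (nt1 + nt2) * ((nt1:ℝ) + nt2)
          - min (min ((nt1:ℝ) * nr) ((nt1:ℝ)^2)) (min ((nt2:ℝ) * nr) ((nt2:ℝ)^2))) /
        (min (nr:ℝ) (nt1 + nt2) - min (nr:ℝ) (min nt1 nt2))) :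
    sSup ((fun β : ℝ => β * min (nr:ℝ) nt1 * (1 - (nt1:ℝ)/(Lstar:ℝ))
        + (1 - β) * min (nr:ℝ) nt2 * (1 - (nt2:ℝ)/(Lstar:ℝ))) '' Set.Icc 0 1) >
      min (nr:ℝ) (nt1 + nt2) * (1 - ((nt1:ℝ) + nt2)/(Lstar:ℝ)) :=
  stmt_8_general nr nt1 nt2 Lstar hL hden hcond
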